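/- Let A ∈ ℝ^{n×p} have nonzero rows a₁,…,aₙ and set τ(A) = max_{i≠j} |⟨a_i, a_j⟩| / ‖a_i‖². For μ₃ ∈ [0,1], define W by w_i = p(1-μ₃)/‖a_i‖² · a_i for each i. Then W satisfies the constraint |AWᵀ/p - I_n|_∞ ≤ μ₃ (entrywise max norm) provided τ(A)/(1+τ(A)) ≤ μ₃, where the diagonal entries of AWᵀ/p equal 1-μ₃ and the off-diagonal entries have absolute value at most (1-μ₃)τ(A) ≤ μ₃. -/
import Mathlib


open Finset

/-- Feasibility part of Theorem 2: the closed-form W satisfies constraint C3. -/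
theorem closed_form_W_feasible {n p : ℕ} (a : Fin n → Fin p → ℝ)
    (hrows : ∀ i, (∑ j, (a i j) ^ 2) ≠ 0)
    (τ μ₃ : ℝ) (hτ : 0 ≤ τ)
    (hτdef : ∀ i i' : Fin n, i ≠ i' →
      |(∑ j, a i j * a i' j)| ≤ τ * (∑ j, (a i j) ^ 2))
    (hμ₃lb : τ / (1 + τ) ≤ μ₃) (hμ₃ub : μ₃ ≤ 1)
    (w : Fin n → Fin p → ℝ)
    (hw : ∀ i j, w i j = (p * (1 - μ₃) / (∑ l, (a i l) ^ 2)) * a i j) :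
    (∀ i : Fin n, (∑ j, a i j * w i j) / p = 1 - μ₃) ∧
    (∀ i i' : Fin n, i ≠ i' →
      |(∑ j, a i j * w i' j) / p| ≤ (1 - μ₃) * τ ∧ (1 - μ₃) * τ ≤ μ₃) ∧
    (∀ i i' : Fin n,
      |(∑ j, a i j * w i' j) / p - (if i = i' then (1 : ℝ) else 0)| ≤ μ₃) := by
  have hτ1 : (0 : ℝ) < 1 + τ := by linarith
  have hμ₃0 : 0 ≤ μ₃ := le_trans (div_nonneg hτ hτ1.le) hμ₃lb
  have hkey : (1 - μ₃) * τ ≤ μ₃ := by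
    have := (div_le_iff₀ hτ1).mp hμ₃lb
    nlinarith
  -- p ≠ 0 whenever Fin n is inhabited
  have hp : ∀ _ : Fin n, (p : ℝ) ≠ 0 := by
    intro i
    intro h
    apply hrows i
    have : p = 0 := by exact_mod_cast h
    subst this
    simp
  have hpos : ∀ i : Fin n, 0 < ∑ l, (a i l) ^ 2 := fun i =>
    lt_of_le_of_ne (Finset.sum_nonneg fun l _ => sq_nonneg _) (Ne.symm (hrows i))
  -- key formula
  have hform : ∀ i i' : Fin n, (∑ j, a i j * w i' j) =
      (p * (1 - μ₃) / (∑ l, (a i' l) ^ 2)) * (∑ j, a i j * a i' j) := by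
    intro i i'
    rw [Finset.mul_sum]
    apply Finset.sum_congr rfl
    intro j _
    rw [hw]; ring
  have hdiag : ∀ i : Fin n, (∑ j, a i j * w i j) / p = 1 - μ₃ := by
    intro i
    rw [hform i i]
    have h1 : ∑ j, a i j * a i j = ∑ l, (a i l) ^ 2 := by
      apply Finset.sum_congr rfl; intro j _; ring
    rw [h1]
    field_simp [hp i, hrows i]
  have hoff : ∀ i i' : Fin n, i ≠ i' →
      |(∑ j, a i j * w i' j) / p| ≤ (1 - μ₃) * τ := by
    intro i i' hne
    rw [hform i i']
    have hb := hτdef i' i hne.symm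
    have hsymm : (∑ j, a i' j * a i j) = ∑ j, a i j * a i' j := by
      apply Finset.sum_congr rfl; intro j _; ring
    rw [hsymm] at hb
    have hpp : (0 : ℝ) < p := by
      rcases Nat.eq_zero_or_pos p with h | h
      · exact absurd (by exact_mod_cast h : (p:ℝ) = 0) (hp i)
      · exact_mod_cast h
    have h1μ : 0 ≤ 1 - μ₃ := by linarith
    rw [abs_div, abs_mul, abs_div, abs_of_pos hpp, abs_of_pos (hpos i'),
      abs_mul, abs_of_pos hpp, abs_of_nonneg h1μ]
    rw [div_le_iff₀ hpp]
    calc (p : ℝ) * (1 - μ₃) / (∑ l, (a i' l) ^ 2) * |∑ j, a i j * a i' j|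
        ≤ (p : ℝ) * (1 - μ₃) / (∑ l, (a i' l) ^ 2) * (τ * (∑ l, (a i' l) ^ 2)) := by
          apply mul_le_mul_of_nonneg_left hb
          positivity
      _ = (1 - μ₃) * τ * p := by field_simp [hrows i']
  refine ⟨hdiag, fun i i' hne => ⟨hoff i i' hne, hkey⟩, ?_⟩
  intro i i'
  by_cases h : i = i'
  · subst h
    simp [hdiag i, abs_of_nonneg hμ₃0]
  · simp only [h, if_false, sub_zero]
    exact le_trans (hoff i i' h) hkey
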